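/- arXiv:1911.02789 — 2 statements merged into one kernel-verified Lean document; each statement's English description precedes it below -/
import Mathlib

section
/- Let L ≥ 2, W ≥ 1 and fix a worker index w. Let A ∈ ℝ^{N×L}, let C_1,…,C_M ∈ ℝ^{L×L}, let c_1,…,c_M ≥ 0 be nonnegative weights, let S, T ∈ ℝ^{L×L} be fixed, let D_v ∈ ℝ^{L×L} for each v ≠ w (v ∈ {1,…,W}) be row-stochastic matrices, and let β ≥ 0 and μ ≥ 4L(W−1)β. Then the function f : ℝ^{L×L} → ℝ defined by f(D) = Σ_{m=1}^M c_m ‖A − A(D + C_m)‖_F² − β Σ_{v≠w} (L−1)^{-2} tr(D Dᵀ H D_v D_vᵀ H) + μ ‖D − S + T‖_F² is convex. (This is Theorem 1 of the paper: under μ/β ≥ 4L(W−1) the subproblem L(D_w) of Eq. (17) is convex, with HSIC instantiated by the linear kernel so that HSIC(D, D_v) = (L−1)^{-2} tr(D Dᵀ H D_v D_vᵀ H).) -/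
open Matrix

/-- The squared Frobenius norm of a real matrix: `‖M‖_F² = ∑ i ∑ j M i j ^ 2`. -/
def frobSq {n L : ℕ} (M : Matrix (Fin n) (Fin L) ℝ) : ℝ :=
  ∑ i, ∑ j, (M i j) ^ 2

/-- An `L × L` real matrix is row-stochastic if all its entries are nonnegative
and each of its rows sums to `1`. -/
def RowStochastic {L : ℕ} (D : Matrix (Fin L) (Fin L) ℝ) : Prop :=
  (∀ i j, 0 ≤ D i j) ∧ (∀ i, ∑ j, D i j = 1)

/-- The `L × L` centering matrix `H = I - (1/L) J`, where `J` is the all-ones matrix. -/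
noncomputable def centering (L : ℕ) : Matrix (Fin L) (Fin L) ℝ :=
  1 - (L : ℝ)⁻¹ • Matrix.of (fun _ _ => (1 : ℝ))

lemma frobSq_nonneg {n L : ℕ} (M : Matrix (Fin n) (Fin L) ℝ) : 0 ≤ frobSq M :=
  Finset.sum_nonneg fun _ _ => Finset.sum_nonneg fun _ _ => sq_nonneg _

lemma frobSq_transpose {n L : ℕ} (M : Matrix (Fin n) (Fin L) ℝ) : frobSq Mᵀ = frobSq M := by
  simp only [frobSq, Matrix.transpose_apply]
  exact Finset.sum_comm

lemma frobSq_mul_le {n m k : ℕ} (X : Matrix (Fin n) (Fin m) ℝ) (Y : Matrix (Fin m) (Fin k) ℝ) :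
    frobSq (X * Y) ≤ frobSq X * frobSq Y := by
  calc frobSq (X * Y) ≤ ∑ i, ∑ j, (∑ p, X i p ^ 2) * (∑ p, Y p j ^ 2) := by
        refine Finset.sum_le_sum fun i _ => Finset.sum_le_sum fun j _ => ?_
        simpa [Matrix.mul_apply] using
          Finset.sum_mul_sq_le_sq_mul_sq Finset.univ (X i) (fun p => Y p j)
    _ = frobSq X * frobSq Y := by
        rw [← Finset.sum_mul_sum]
        rw [frobSq, frobSq]
        congr 1
        exact Finset.sum_comm

lemma frobSq_eq_trace {n L : ℕ} (M : Matrix (Fin n) (Fin L) ℝ) :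
    frobSq M = Matrix.trace (M * Mᵀ) := by
  simp [frobSq, Matrix.trace, Matrix.mul_apply, Matrix.diag, sq]

lemma centering_transpose (L : ℕ) : (centering L)ᵀ = centering L := by
  unfold centering
  ext i j
  simp [Matrix.one_apply, eq_comm]

lemma centering_mul_self {L : ℕ} (hL : 2 ≤ L) : centering L * centering L = centering L := by
  have hL0 : (L : ℝ) ≠ 0 := by positivity
  unfold centering
  ext i j
  simp only [Matrix.mul_apply, Matrix.sub_apply, Matrix.smul_apply, Matrix.of_apply,
    Matrix.one_apply, smul_eq_mul, mul_one, sub_mul, mul_sub]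
  rw [Finset.sum_sub_distrib]
  rw [Finset.sum_sub_distrib]
  simp [Finset.sum_ite_eq, Finset.sum_ite_eq', Finset.mul_sum]
  field_simp
  simp

lemma trace_centering {L : ℕ} (hL : 2 ≤ L) :
    Matrix.trace (centering L) = (L : ℝ) - 1 := by
  have hL0 : (L : ℝ) ≠ 0 := by positivity
  unfold centering
  simp [Matrix.trace, Matrix.diag, Matrix.one_apply, Finset.sum_sub_distrib]
  field_simp

lemma frobSq_centering {L : ℕ} (hL : 2 ≤ L) :
    frobSq (centering L) = (L : ℝ) - 1 := by
  rw [frobSq_eq_trace, centering_transpose, centering_mul_self hL, trace_centering hL]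

lemma frobSq_rowStochastic {L : ℕ} {D : Matrix (Fin L) (Fin L) ℝ}
    (hD : RowStochastic D) : frobSq D ≤ (L : ℝ) := by
  obtain ⟨h0, h1⟩ := hD
  have hle : ∀ i j, D i j ≤ 1 := by
    intro i j
    calc D i j ≤ ∑ k, D i k := Finset.single_le_sum (fun k _ => h0 i k) (Finset.mem_univ j)
    _ = 1 := h1 i
  calc frobSq D ≤ ∑ i : Fin L, ∑ j, D i j := by
        refine Finset.sum_le_sum fun i _ => Finset.sum_le_sum fun j _ => ?_
        rw [sq]
        nlinarith [h0 i j, hle i j]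
    _ = (L : ℝ) := by simp [h1]

lemma trace_sym {L : ℕ} (K u v : Matrix (Fin L) (Fin L) ℝ) (hK : Kᵀ = K) :
    Matrix.trace (u * (vᵀ * K)) = Matrix.trace (v * (uᵀ * K)) := by
  rw [← Matrix.trace_transpose (u * (vᵀ * K))]
  simp only [Matrix.transpose_mul, Matrix.transpose_transpose, hK, Matrix.mul_assoc]
  rw [Matrix.trace_mul_comm, Matrix.mul_assoc]

lemma trace_quad_combo {L : ℕ} (K x y : Matrix (Fin L) (Fin L) ℝ) (hK : Kᵀ = K)
    (a b : ℝ) (hab : a + b = 1) :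
    Matrix.trace ((a • x + b • y) * ((a • x + b • y)ᵀ * K))
      = a * Matrix.trace (x * (xᵀ * K)) + b * Matrix.trace (y * (yᵀ * K))
        - a * b * Matrix.trace ((x - y) * ((x - y)ᵀ * K)) := by
  have h12 := trace_sym K x y hK
  have hb : b = 1 - a := by linarith
  subst hb
  simp only [Matrix.transpose_add, Matrix.transpose_smul, Matrix.transpose_sub,
    Matrix.add_mul, Matrix.mul_add, Matrix.sub_mul, Matrix.mul_sub,
    smul_mul_assoc, mul_smul_comm, Matrix.trace_add, Matrix.trace_sub,
    Matrix.trace_smul, smul_eq_mul, smul_smul]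
  rw [h12]
  ring

lemma trace_eq_frobSq' {L : ℕ} (Hm Dm E : Matrix (Fin L) (Fin L) ℝ) (hH : Hmᵀ = Hm) :
    Matrix.trace (E * Eᵀ * Hm * Dm * Dmᵀ * Hm) = frobSq (Eᵀ * (Hm * Dm)) := by
  rw [frobSq_eq_trace]
  simp only [Matrix.transpose_mul, Matrix.transpose_transpose, hH, Matrix.mul_assoc]
  rw [Matrix.trace_mul_comm]
  simp only [Matrix.mul_assoc]

lemma quad_combo {L : ℕ} (Hm Dm x y : Matrix (Fin L) (Fin L) ℝ) (hH : Hmᵀ = Hm)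
    (a b : ℝ) (hab : a + b = 1) :
    Matrix.trace ((a • x + b • y) * (a • x + b • y)ᵀ * Hm * Dm * Dmᵀ * Hm)
      = a * Matrix.trace (x * xᵀ * Hm * Dm * Dmᵀ * Hm)
        + b * Matrix.trace (y * yᵀ * Hm * Dm * Dmᵀ * Hm)
        - a * b * Matrix.trace ((x - y) * (x - y)ᵀ * Hm * Dm * Dmᵀ * Hm) := by
  have hK : (Hm * (Dm * (Dmᵀ * Hm)))ᵀ = Hm * (Dm * (Dmᵀ * Hm)) := by
    simp [Matrix.transpose_mul, hH, Matrix.mul_assoc]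
  have h := trace_quad_combo (Hm * (Dm * (Dmᵀ * Hm))) x y hK a b hab
  simpa only [Matrix.mul_assoc] using h

lemma qv_bound {L : ℕ} (hL : 2 ≤ L) {Dm : Matrix (Fin L) (Fin L) ℝ}
    (hDm : RowStochastic Dm) (E : Matrix (Fin L) (Fin L) ℝ) :
    Matrix.trace (E * Eᵀ * centering L * Dm * Dmᵀ * centering L)
      ≤ ((L : ℝ) - 1) * L * frobSq E := by
  rw [trace_eq_frobSq' _ _ _ (centering_transpose L)]
  have hL1 : (1 : ℝ) ≤ (L : ℝ) - 1 := by
    have : (2 : ℝ) ≤ (L : ℝ) := by exact_mod_cast hL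
    linarith
  calc frobSq (Eᵀ * (centering L * Dm))
      ≤ frobSq Eᵀ * frobSq (centering L * Dm) := frobSq_mul_le _ _
    _ ≤ ((L : ℝ) - 1) * L * frobSq E := by
        have h2 := frobSq_mul_le (centering L) Dm
        have h3 : frobSq Dm ≤ (L : ℝ) := frobSq_rowStochastic hDm
        rw [frobSq_transpose]
        rw [frobSq_centering hL] at h2
        have h4 : frobSq (centering L * Dm) ≤ ((L : ℝ) - 1) * L := by nlinarith
        nlinarith [mul_le_mul_of_nonneg_left h4 (frobSq_nonneg E)]

lemma frobSq_combo {n L : ℕ} (U V : Matrix (Fin n) (Fin L) ℝ) (a b : ℝ) (hab : a + b = 1) :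
    frobSq (a • U + b • V) = a * frobSq U + b * frobSq V - a * b * frobSq (U - V) := by
  have hb : b = 1 - a := by linarith
  subst hb
  simp only [frobSq, Finset.mul_sum, ← Finset.sum_sub_distrib, ← Finset.sum_add_distrib]
  refine Finset.sum_congr rfl fun i _ => Finset.sum_congr rfl fun j _ => ?_
  simp only [Matrix.add_apply, Matrix.smul_apply, Matrix.sub_apply, smul_eq_mul]
  ring

/-- Theorem 1 of the paper: with `L ≥ 2`, `W ≥ 1`, a fixed worker `w`,
nonnegative group weights `c m`, row-stochastic matrices `D v` for every worker `v ≠ w`,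
`β ≥ 0` and `μ ≥ 4 L (W - 1) β`, the subproblem objective
`f(D) = ∑ m, c m ‖A − A (D + C m)‖_F²
        − β ∑_{v ≠ w} (L−1)⁻² tr (D Dᵀ H (D v) (D v)ᵀ H) + μ ‖D − S + T‖_F²`
(HSIC instantiated by the linear kernel) is convex. -/
theorem subproblem_convex {N L W M : ℕ} (hL : 2 ≤ L) (hW : 1 ≤ W) (w : Fin W)
    (A : Matrix (Fin N) (Fin L) ℝ)
    (C : Fin M → Matrix (Fin L) (Fin L) ℝ)
    (c : Fin M → ℝ) (hc : ∀ m, 0 ≤ c m)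
    (S T : Matrix (Fin L) (Fin L) ℝ)
    (Dv : Fin W → Matrix (Fin L) (Fin L) ℝ)
    (hDv : ∀ v, v ≠ w → RowStochastic (Dv v))
    (β μ : ℝ) (hβ : 0 ≤ β) (hμ : 4 * L * (W - 1 : ℝ) * β ≤ μ) :
    ConvexOn ℝ Set.univ (fun D : Matrix (Fin L) (Fin L) ℝ =>
      (∑ m, c m * frobSq (A - A * (D + C m)))
        - β * ∑ v ∈ Finset.univ.erase w,
            ((L : ℝ) - 1)⁻¹ ^ 2 *
              Matrix.trace (D * Dᵀ * centering L * Dv v * (Dv v)ᵀ * centering L)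
        + μ * frobSq (D - S + T)) := by
  refine ⟨convex_univ, fun x _ y _ a b ha hb hab => ?_⟩
  simp only [smul_eq_mul]
  set t : ℝ := ((L : ℝ) - 1)⁻¹ ^ 2 with ht
  have hL1 : (1 : ℝ) ≤ (L : ℝ) - 1 := by
    have : (2 : ℝ) ≤ (L : ℝ) := by exact_mod_cast hL
    linarith
  have ht0 : 0 ≤ t := by positivity
  set F : ℝ := frobSq (x - y) with hF
  -- matrix identities
  have hm1 : ∀ m, A - A * ((a • x + b • y) + C m)
      = a • (A - A * (x + C m)) + b • (A - A * (y + C m)) := by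
    intro m
    have hb' : b = 1 - a := by linarith
    subst hb'
    simp only [Matrix.mul_add, Matrix.mul_smul]
    module
  have hdiff1 : ∀ m, (A - A * (x + C m)) - (A - A * (y + C m)) = A * (y - x) := by
    intro m
    simp only [Matrix.mul_add, Matrix.mul_sub]
    abel
  have hm3 : (a • x + b • y) - S + T = a • (x - S + T) + b • (y - S + T) := by
    have hb' : b = 1 - a := by linarith
    subst hb'
    module
  have hdiff3 : (x - S + T) - (y - S + T) = x - y := by abel
  -- per-term identities
  have s1 : ∀ m, frobSq (A - A * ((a • x + b • y) + C m))
      = a * frobSq (A - A * (x + C m)) + b * frobSq (A - A * (y + C m))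
        - a * b * frobSq (A * (y - x)) := by
    intro m
    rw [hm1 m, frobSq_combo _ _ a b hab, hdiff1 m]
  have s2 : ∀ v, Matrix.trace ((a • x + b • y) * (a • x + b • y)ᵀ
        * centering L * Dv v * (Dv v)ᵀ * centering L)
      = a * Matrix.trace (x * xᵀ * centering L * Dv v * (Dv v)ᵀ * centering L)
        + b * Matrix.trace (y * yᵀ * centering L * Dv v * (Dv v)ᵀ * centering L)
        - a * b * Matrix.trace ((x - y) * (x - y)ᵀ * centering L * Dv v * (Dv v)ᵀ * centering L) :=
    fun v => quad_combo (centering L) (Dv v) x y (centering_transpose L) a b hab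
  have s3 : frobSq ((a • x + b • y) - S + T)
      = a * frobSq (x - S + T) + b * frobSq (y - S + T) - a * b * F := by
    rw [hm3, frobSq_combo _ _ a b hab, hdiff3]
  -- sum expansions
  have e1 : ∑ m, c m * frobSq (A - A * ((a • x + b • y) + C m))
      = a * (∑ m, c m * frobSq (A - A * (x + C m)))
        + b * (∑ m, c m * frobSq (A - A * (y + C m)))
        - a * b * ((∑ m, c m) * frobSq (A * (y - x))) := by
    rw [Finset.mul_sum, Finset.mul_sum, Finset.sum_mul, Finset.mul_sum,
      ← Finset.sum_add_distrib, ← Finset.sum_sub_distrib]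
    refine Finset.sum_congr rfl fun m _ => ?_
    rw [s1 m]; ring
  have e2 : ∑ v ∈ Finset.univ.erase w, t * Matrix.trace ((a • x + b • y) * (a • x + b • y)ᵀ
        * centering L * Dv v * (Dv v)ᵀ * centering L)
      = a * (∑ v ∈ Finset.univ.erase w,
            t * Matrix.trace (x * xᵀ * centering L * Dv v * (Dv v)ᵀ * centering L))
        + b * (∑ v ∈ Finset.univ.erase w,
            t * Matrix.trace (y * yᵀ * centering L * Dv v * (Dv v)ᵀ * centering L))
        - a * b * (∑ v ∈ Finset.univ.erase w,
            t * Matrix.trace ((x - y) * (x - y)ᵀ * centering L * Dv v * (Dv v)ᵀ * centering L)) := by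
    rw [Finset.mul_sum, Finset.mul_sum, Finset.mul_sum,
      ← Finset.sum_add_distrib, ← Finset.sum_sub_distrib]
    refine Finset.sum_congr rfl fun v _ => ?_
    rw [s2 v]; ring
  -- the key bound
  have hterm : ∀ v ∈ Finset.univ.erase w,
      t * Matrix.trace ((x - y) * (x - y)ᵀ * centering L * Dv v * (Dv v)ᵀ * centering L)
        ≤ 4 * L * F := by
    intro v hv
    have hq := qv_bound hL (hDv v (Finset.ne_of_mem_erase hv)) (x - y)
    have hne : ((L : ℝ) - 1) ≠ 0 := by linarith
    have heq : t * (((L : ℝ) - 1) * L * F) = ((L : ℝ) - 1)⁻¹ * ((L : ℝ) * F) := by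
      rw [ht]; field_simp
    have hinv : ((L : ℝ) - 1)⁻¹ ≤ 1 := by
      rw [inv_le_one_iff₀]; right; linarith
    have hLF : 0 ≤ (L : ℝ) * F := mul_nonneg (Nat.cast_nonneg L) (frobSq_nonneg _)
    calc t * Matrix.trace ((x - y) * (x - y)ᵀ * centering L * Dv v * (Dv v)ᵀ * centering L)
        ≤ t * (((L : ℝ) - 1) * L * F) := by
          exact mul_le_mul_of_nonneg_left hq ht0
      _ = ((L : ℝ) - 1)⁻¹ * ((L : ℝ) * F) := heq
      _ ≤ 1 * ((L : ℝ) * F) := mul_le_mul_of_nonneg_right hinv hLF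
      _ ≤ 4 * L * F := by nlinarith [frobSq_nonneg (x - y)]
  have hcard : ((Finset.univ.erase w).card : ℝ) = (W : ℝ) - 1 := by
    rw [Finset.card_erase_of_mem (Finset.mem_univ w)]
    simp [Nat.cast_sub hW]
  have hR2 : ∑ v ∈ Finset.univ.erase w,
      t * Matrix.trace ((x - y) * (x - y)ᵀ * centering L * Dv v * (Dv v)ᵀ * centering L)
        ≤ ((W : ℝ) - 1) * (4 * L * F) := by
    calc _ ≤ (Finset.univ.erase w).card • (4 * (L : ℝ) * F) :=
          Finset.sum_le_card_nsmul _ _ _ hterm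
      _ = ((W : ℝ) - 1) * (4 * L * F) := by rw [nsmul_eq_mul, hcard]
  have key : β * ∑ v ∈ Finset.univ.erase w,
      t * Matrix.trace ((x - y) * (x - y)ᵀ * centering L * Dv v * (Dv v)ᵀ * centering L)
        ≤ μ * F := by
    have h1 : β * ∑ v ∈ Finset.univ.erase w,
        t * Matrix.trace ((x - y) * (x - y)ᵀ * centering L * Dv v * (Dv v)ᵀ * centering L)
          ≤ β * (((W : ℝ) - 1) * (4 * L * F)) := mul_le_mul_of_nonneg_left hR2 hβ
    have h2 : (4 * (L : ℝ) * ((W : ℝ) - 1) * β) * F ≤ μ * F :=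
      mul_le_mul_of_nonneg_right hμ (frobSq_nonneg _)
    nlinarith [h1, h2]
  have hR1 : 0 ≤ (∑ m, c m) * frobSq (A * (y - x)) :=
    mul_nonneg (Finset.sum_nonneg fun m _ => hc m) (frobSq_nonneg _)
  rw [e1, e2, s3]
  have hab0 : 0 ≤ a * b := mul_nonneg ha hb
  nlinarith [mul_le_mul_of_nonneg_left key hab0, mul_nonneg hab0 hR1]
end

section
/- Let r > 1 be a real number, let M ≥ 1, and let a_1,…,a_M > 0 be positive reals. Then the minimum of Σ_{m=1}^M λ_m^r · a_m over all λ in the probability simplex equals ( Σ_{m=1}^M a_m^{1/(1−r)} )^{1−r}. (This is the optimal value attained by the weight-update rule of Eq. (23).) -/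
/-!
Put `w m = a m ^ (1/(1-r))`. Weighted Hölder with weights `w` and exponent `r`, applied to
`λ m / w m`, gives `(∑ λ)^r ≤ (∑ w)^(r-1) · ∑ λ^r a`, so on the simplex the objective is at
least `(∑ w)^(1-r)`. Since `w^r a = w`, the normalised weights `λ = w / ∑ w` attain this value.
-/

open Finset Real

section

variable {ι : Type*} {r : ℝ}

lemma rpow_one_div_one_sub_rpow_mul_self {a : ℝ} (ha : 0 < a) (hr : r ≠ 1) :
    (a ^ ((1 : ℝ) / (1 - r))) ^ r * a = a ^ ((1 : ℝ) / (1 - r)) := by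
  have h1r : 1 - r ≠ 0 := sub_ne_zero.mpr hr.symm
  rw [← rpow_mul ha.le, ← rpow_add_one ha.ne']
  congr 1
  field_simp
  ring

lemma sum_rpow_le_rpow_mul_sum_rpow_mul (s : Finset ι) (hr : 1 < r) {a lam : ι → ℝ}
    (ha : ∀ i, 0 < a i) (hlam : ∀ i, 0 ≤ lam i) :
    (∑ i ∈ s, lam i) ^ r ≤
      (∑ i ∈ s, a i ^ ((1 : ℝ) / (1 - r))) ^ (r - 1) * ∑ i ∈ s, lam i ^ r * a i := by
  set w : ι → ℝ := fun i ↦ a i ^ ((1 : ℝ) / (1 - r))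
  have hw : ∀ i, 0 < w i := fun i ↦ rpow_pos_of_pos (ha i) _
  have holder := inner_le_weight_mul_Lp_of_nonneg s hr.le w (fun i ↦ lam i / w i)
    (fun i ↦ (hw i).le) (fun i ↦ div_nonneg (hlam i) (hw i).le)
  have hwf : ∀ i, w i * (lam i / w i) = lam i := fun i ↦ mul_div_cancel₀ _ (hw i).ne'
  have hwfr : ∀ i, w i * (lam i / w i) ^ r = lam i ^ r * a i := by
    intro i
    have hwa : a i = w i / w i ^ r := by
      rw [eq_div_iff (rpow_pos_of_pos (hw i) r).ne', mul_comm]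
      exact rpow_one_div_one_sub_rpow_mul_self (ha i) hr.ne'
    rw [div_rpow (hlam i) (hw i).le, hwa]
    ring
  simp only [hwf, hwfr] at holder
  have hr0 : 0 < r := by linarith
  calc (∑ i ∈ s, lam i) ^ r
      ≤ ((∑ i ∈ s, w i) ^ (1 - r⁻¹) * (∑ i ∈ s, lam i ^ r * a i) ^ r⁻¹) ^ r :=
        rpow_le_rpow (sum_nonneg fun i _ ↦ hlam i) holder hr0.le
    _ = (∑ i ∈ s, w i) ^ (r - 1) * ∑ i ∈ s, lam i ^ r * a i := by
        have hS : 0 ≤ ∑ i ∈ s, w i := sum_nonneg fun i _ ↦ (hw i).le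
        have hT : 0 ≤ ∑ i ∈ s, lam i ^ r * a i :=
          sum_nonneg fun i _ ↦ mul_nonneg (rpow_nonneg (hlam i) _) (ha i).le
        rw [mul_rpow (rpow_nonneg hS _) (rpow_nonneg hT _), ← rpow_mul hS, ← rpow_mul hT,
          inv_mul_cancel₀ hr0.ne', rpow_one, sub_mul, one_mul, inv_mul_cancel₀ hr0.ne']

variable [Fintype ι]

/-- The weight-update rule of Eq. (23). -/
noncomputable def weightUpdate (r : ℝ) (a : ι → ℝ) (i : ι) : ℝ :=
  a i ^ ((1 : ℝ) / (1 - r)) / ∑ j, a j ^ ((1 : ℝ) / (1 - r))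

variable {a : ι → ℝ}

lemma weightUpdate_nonneg (ha : ∀ i, 0 ≤ a i) (i : ι) : 0 ≤ weightUpdate r a i :=
  div_nonneg (rpow_nonneg (ha i) _) (sum_nonneg fun j _ ↦ rpow_nonneg (ha j) _)

lemma sum_rpow_one_div_one_sub_pos [Nonempty ι] (ha : ∀ i, 0 < a i) :
    0 < ∑ i, a i ^ ((1 : ℝ) / (1 - r)) :=
  sum_pos (fun i _ ↦ rpow_pos_of_pos (ha i) _) univ_nonempty

lemma sum_weightUpdate [Nonempty ι] (ha : ∀ i, 0 < a i) : ∑ i, weightUpdate r a i = 1 := by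
  simp only [weightUpdate]
  rw [← sum_div, div_self (sum_rpow_one_div_one_sub_pos ha).ne']

lemma sum_weightUpdate_rpow_mul [Nonempty ι] (hr : r ≠ 1) (ha : ∀ i, 0 < a i) :
    ∑ i, weightUpdate r a i ^ r * a i = (∑ i, a i ^ ((1 : ℝ) / (1 - r))) ^ (1 - r) := by
  have hS := sum_rpow_one_div_one_sub_pos (r := r) ha
  simp only [weightUpdate, div_rpow (rpow_nonneg (ha _).le _) hS.le, div_mul_eq_mul_div,
    rpow_one_div_one_sub_rpow_mul_self (ha _) hr, ← sum_div]
  rw [rpow_sub hS, rpow_one]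

end

/-- optimal value of the weight-update rule of Eq. (23): for `r > 1`
and positive reals `a_1, …, a_M`, the minimum of `∑ m, λ_m^r a_m` over the
probability simplex equals `(∑ m, a_m^{1/(1−r)})^{1−r}`. -/
theorem weight_update_optimal_value {M : ℕ} (hM : 1 ≤ M) (r : ℝ) (hr : 1 < r)
    (a : Fin M → ℝ) (ha : ∀ m, 0 < a m) :
    IsLeast
      {x : ℝ | ∃ lam : Fin M → ℝ, (∀ m, 0 ≤ lam m) ∧ (∑ m, lam m = 1) ∧
        x = ∑ m, lam m ^ r * a m}
      ((∑ m, a m ^ ((1 : ℝ) / (1 - r))) ^ (1 - r)) := by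
  have : Nonempty (Fin M) := ⟨⟨0, hM⟩⟩
  refine ⟨⟨weightUpdate r a, weightUpdate_nonneg (fun m ↦ (ha m).le), sum_weightUpdate ha,
    (sum_weightUpdate_rpow_mul hr.ne' ha).symm⟩, ?_⟩
  rintro _ ⟨lam, hlam, hsum, rfl⟩
  have hS := sum_rpow_one_div_one_sub_pos (r := r) ha
  have hbound := sum_rpow_le_rpow_mul_sum_rpow_mul univ hr ha hlam
  rw [hsum, one_rpow] at hbound
  have hinv : (∑ m, a m ^ ((1 : ℝ) / (1 - r))) ^ (1 - r) =
      ((∑ m, a m ^ ((1 : ℝ) / (1 - r))) ^ (r - 1))⁻¹ := by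
    rw [← rpow_neg hS.le, neg_sub]
  rw [hinv, inv_le_iff_one_le_mul₀ (rpow_pos_of_pos hS _), mul_comm]
  exact hbound
end
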